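/- arXiv:1209.1592 — 11 statements merged into one kernel-verified Lean document; each statement's English description precedes it below -/
import Mathlib

section
/- Lemma III.1.3(c): Let A be a set with two binary operations | and ⋆. If condition C6 ((a | b) ⋆ b = a for all a, b) and condition C4 ((a|b)⋆(c|d) = (a⋆c)|(b⋆d) for all a, b, c, d) hold, then condition C7 holds: (a ⋆ b) | b = a for all a, b ∈ A. -/
/-- Lemma III.1.3(c): C6 and C4 imply C7. -/
theorem stmt_2 {A : Type*} (bar star : A → A → A)
    (C6 : ∀ a b : A, star (bar a b) b = a)
    (C4 : ∀ a b c d : A, star (bar a b) (bar c d) = bar (star a c) (star b d)) :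
    ∀ a b : A, bar (star a b) b = a := by
  intro a b
  calc bar (star a b) b = bar (star a b) (star (bar b b) b) := by rw [C6]
    _ = star (bar a (bar b b)) (bar b b) := by rw [C4]
    _ = a := C6 _ _
end

section
/- Lemma III.1.3(d): Let A be a set with two binary operations | and ⋆. If condition C7 ((a ⋆ b) | b = a for all a, b) and condition C4 ((a|b)⋆(c|d) = (a⋆c)|(b⋆d) for all a, b, c, d) hold, then condition C6 holds: (a | b) ⋆ b = a for all a, b ∈ A. -/
/-- Lemma III.1.3(d): C7 and C4 imply C6. -/
theorem stmt_3 {A : Type*} (bar star : A → A → A)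
    (C7 : ∀ a b : A, bar (star a b) b = a)
    (C4 : ∀ a b c d : A, star (bar a b) (bar c d) = bar (star a c) (star b d)) :
    ∀ a b : A, star (bar a b) b = a := by
  intro a b
  calc star (bar a b) b = star (bar a b) (bar (star b b) b) := by rw [C7]
    _ = bar (star a (star b b)) (star b b) := C4 ..
    _ = a := C7 ..
end

section
/- Lemma III.1.3(e): Let A be a set with two binary operations | and ⋆. If condition C6 ((a | b) ⋆ b = a for all a, b) and condition C4 ((a|b)⋆(c|d) = (a⋆c)|(b⋆d) for all a, b, c, d) hold, then condition C5 holds: (a⋆b)⋆(c⋆d) = (a⋆c)⋆(b⋆d) for all a, b, c, d ∈ A. -/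
/-- Lemma III.1.3(e): C6 and C4 imply C5. -/
theorem stmt_4 {A : Type*} (bar star : A → A → A)
    (C6 : ∀ a b : A, star (bar a b) b = a)
    (C4 : ∀ a b c d : A, star (bar a b) (bar c d) = bar (star a c) (star b d)) :
    ∀ a b c d : A, star (star a b) (star c d) = star (star a c) (star b d) := by
  -- First derive C7 restricted to elements written as stars:
  have key : ∀ a b c d : A,
      bar (star (star a b) (star c d)) (star c d) = star a b := by
    intro a b c d
    set V := star c d with hV
    set U := bar V V with hU
    have h1 : star U V = V := C6 V V
    calc bar (star (star a b) V) V
        = bar (star (star a b) V) (star U V) := by rw [h1]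
      _ = star (bar (star a b) U) (bar V V) := (C4 _ _ _ _).symm
      _ = star (bar (star a b) U) U := by rw [← hU]
      _ = star a b := C6 _ _
  -- Full C7: bar (star x y) y = x
  have C7 : ∀ x y : A, bar (star x y) y = x := by
    intro x y
    have hx : star (bar x x) x = x := C6 x x
    have hy : star (bar y y) y = y := C6 y y
    have := key (bar x x) x (bar y y) y
    rw [hx, hy] at this
    exact this
  intro a b c d
  have ha : bar (star a c) c = a := C7 a c
  have hb : bar (star b d) d = b := C7 b d
  calc star (star a b) (star c d)
      = star (star (bar (star a c) c) (bar (star b d) d)) (star c d) := by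
        rw [ha, hb]
    _ = star (bar (star (star a c) (star b d)) (star c d)) (star c d) := by
        rw [C4]
    _ = star (star a c) (star b d) := C6 _ _
end

section
/- Lemma III.1.3(f): Let A be a set with two binary operations | and ⋆. If condition C7 ((a ⋆ b) | b = a for all a, b) and condition C4 ((a|b)⋆(c|d) = (a⋆c)|(b⋆d) for all a, b, c, d) hold, then condition C3 holds: (a|b)|(c|d) = (a|c)|(b|d) for all a, b, c, d ∈ A. -/
/-- Lemma III.1.3(f): C7 and C4 imply C3. -/
theorem stmt_5 {A : Type*} (bar star : A → A → A)
    (C7 : ∀ a b : A, bar (star a b) b = a)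
    (C4 : ∀ a b c d : A, star (bar a b) (bar c d) = bar (star a c) (star b d)) :
    ∀ a b c d : A, bar (bar a b) (bar c d) = bar (bar a c) (bar b d) := by
  -- First derive C6: (a|b)⋆b = a
  have C6 : ∀ a b : A, star (bar a b) b = a := by
    intro a b
    calc star (bar a b) b
        = star (bar a b) (bar (star b b) b) := by rw [C7 b b]
      _ = bar (star a (star b b)) (star b b) := C4 a b (star b b) b
      _ = a := C7 a (star b b)
  intro a b c d
  have h : bar a b = star (bar (bar a c) (bar b d)) (bar c d) := by
    rw [C4, C6, C6]
  rw [h, C7]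
end

section
/- Lemma III.1.3(g): Let A be a set with two binary operations | and ⋆. If conditions C5 ((a⋆b)⋆(c⋆d) = (a⋆c)⋆(b⋆d)), C6 ((a | b) ⋆ b = a) and C7 ((a ⋆ b) | b = a) hold for all elements of A, then condition C4 holds: (a|b)⋆(c|d) = (a⋆c)|(b⋆d) for all a, b, c, d ∈ A. -/
/-- Lemma III.1.3(g): C5, C6 and C7 imply C4. -/
theorem stmt_6 {A : Type*} (bar star : A → A → A)
    (C5 : ∀ a b c d : A, star (star a b) (star c d) = star (star a c) (star b d))
    (C6 : ∀ a b : A, star (bar a b) b = a)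
    (C7 : ∀ a b : A, bar (star a b) b = a) :
    ∀ a b c d : A, star (bar a b) (bar c d) = bar (star a c) (star b d) := by
  intro a b c d
  have key : star (star (bar a b) (bar c d)) (star b d) = star a c := by
    rw [C5, C6, C6]
  calc star (bar a b) (bar c d)
      = bar (star (star (bar a b) (bar c d)) (star b d)) (star b d) := (C7 _ _).symm
    _ = bar (star a c) (star b d) := by rw [key]
end

section
/- Lemma III.1.3(h): Let A be a set with two binary operations | and ⋆. If conditions C3 ((a|b)|(c|d) = (a|c)|(b|d)), C6 ((a | b) ⋆ b = a) and C7 ((a ⋆ b) | b = a) hold for all elements of A, then condition C4 holds: (a|b)⋆(c|d) = (a⋆c)|(b⋆d) for all a, b, c, d ∈ A. -/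
/-- Lemma III.1.3(h): C3, C6 and C7 imply C4. -/
theorem stmt_7 {A : Type*} (bar star : A → A → A)
    (C3 : ∀ a b c d : A, bar (bar a b) (bar c d) = bar (bar a c) (bar b d))
    (C6 : ∀ a b : A, star (bar a b) b = a)
    (C7 : ∀ a b : A, bar (star a b) b = a) :
    ∀ a b c d : A, star (bar a b) (bar c d) = bar (star a c) (star b d) := by
  intro a b c d
  conv_lhs => rw [← C7 a c, ← C7 b d, C3, C6]
end

section
/- Traczyk's identity (proved by Bowszyc): Let A be a set with two binary operations | and ⋆ satisfying C3 ((a|b)|(c|d) = (a|c)|(b|d)), C4 ((a|b)⋆(c|d) = (a⋆c)|(b⋆d)) and C6 ((a|b)⋆b = a) for all elements of A (these all hold in any Conway algebra). Then for all a, b, c, d ∈ A: ((a|b)⋆c)|d = ((a|d)⋆c)|b. -/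
/-- Traczyk's identity (proved by Bowszyc): in any structure satisfying C3, C4 and C6,
    ((a|b)⋆c)|d = ((a|d)⋆c)|b. -/
theorem stmt_8 {A : Type*} (bar star : A → A → A)
    (C3 : ∀ a b c d : A, bar (bar a b) (bar c d) = bar (bar a c) (bar b d))
    (C4 : ∀ a b c d : A, star (bar a b) (bar c d) = bar (star a c) (star b d))
    (C6 : ∀ a b : A, star (bar a b) b = a) :
    ∀ a b c d : A, bar (star (bar a b) c) d = bar (star (bar a d) c) b := by
  intro a b c d
  calc bar (star (bar a b) c) d
      = bar (star (bar a b) c) (star (bar d c) c) := by rw [C6]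
    _ = star (bar (bar a b) (bar d c)) (bar c c) := by rw [C4]
    _ = star (bar (bar a d) (bar b c)) (bar c c) := by rw [C3]
    _ = bar (star (bar a d) c) (star (bar b c) c) := by rw [C4]
    _ = bar (star (bar a d) c) b := by rw [C6]
end

section
/- If ∗ is an invertible self-entropic binary operation on a set X, with inverse operation ∗̄ (that is, (a ∗ b) ∗̄ b = a and (a ∗̄ b) ∗ b = a for all a, b ∈ X), then the inverse operation ∗̄ is also self-entropic: (a ∗̄ b) ∗̄ (c ∗̄ d) = (a ∗̄ c) ∗̄ (b ∗̄ d) for all a, b, c, d ∈ X. -/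
/-- The inverse of an invertible self-entropic operation is self-entropic. -/
theorem stmt_9 {X : Type*} (op inv : X → X → X)
    (entropic : ∀ a b c d : X, op (op a b) (op c d) = op (op a c) (op b d))
    (hinv1 : ∀ a b : X, inv (op a b) b = a)
    (hinv2 : ∀ a b : X, op (inv a b) b = a) :
    ∀ a b c d : X, inv (inv a b) (inv c d) = inv (inv a c) (inv b d) := by
  intro a b c d
  have key : op (op (inv (inv a c) (inv b d)) (inv c d)) b = a := by
    calc op (op (inv (inv a c) (inv b d)) (inv c d)) b
        = op (op (inv (inv a c) (inv b d)) (inv c d)) (op (inv b d) d) := by rw [hinv2]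
      _ = op (op (inv (inv a c) (inv b d)) (inv b d)) (op (inv c d) d) := entropic _ _ _ _
      _ = op (inv a c) c := by rw [hinv2, hinv2]
      _ = a := hinv2 _ _
  have h2 : inv a b = op (inv (inv a c) (inv b d)) (inv c d) := by
    conv_lhs => rw [← key, hinv1]
  rw [h2, hinv1]
end

section
/- Proposition III:1.22(i): Let ∗ and ∗' be binary operations on a set X such that (a ∗ b) ∗' (c ∗ d) = (a ∗' c) ∗ (b ∗' d) for all a, b, c, d ∈ X, and suppose ∗ is invertible with inverse operation ∗̄ (meaning (a ∗ b) ∗̄ b = a and (a ∗̄ b) ∗ b = a for all a, b). Then the inverse ∗̄ satisfies the entropic relation with ∗': for all x, y, b, d ∈ X, (x ∗' y) ∗̄ (b ∗' d) = (x ∗̄ b) ∗' (y ∗̄ d). -/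
/-- Proposition III:1.22(i): if ∗ and ∗' satisfy the entropic relation and ∗ is invertible
    with inverse ∗̄, then ∗̄ satisfies the entropic relation with ∗'. -/
theorem stmt_11 {X : Type*} (op op' inv : X → X → X)
    (hent : ∀ a b c d : X, op' (op a b) (op c d) = op (op' a c) (op' b d))
    (hinv1 : ∀ a b : X, inv (op a b) b = a)
    (hinv2 : ∀ a b : X, op (inv a b) b = a) :
    ∀ x y b d : X, inv (op' x y) (op' b d) = op' (inv x b) (inv y d) := by
  intro x y b d
  have h := hent (inv x b) b (inv y d) d
  rw [hinv2, hinv2] at h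
  rw [h, hinv1]
end

section
/- Murdoch–Toyoda Theorem (Theorem III:1.20): Let (X, ∗) be a nonempty entropic quasigroup, i.e. ∗ is entropic ((a ∗ b) ∗ (c ∗ d) = (a ∗ c) ∗ (b ∗ d) for all a, b, c, d) and for all a, b ∈ X each of the equations a ∗ x = b and y ∗ a = b has a unique solution. Then there exists an abelian group structure (X, +) on X, commuting group automorphisms f, g of (X, +) (f ∘ g = g ∘ f), and an element c ∈ X, such that a ∗ b = f(a) + g(b) + c for all a, b ∈ X. -/
private lemma MT_rearr1 {G : Type*} [AddCommGroup G] {a b c d : G} (h : a = b + c - d) :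
    b = a + d - c := by rw [h]; abel

private lemma MT_rearr2 {G : Type*} [AddCommGroup G] {a b c d : G} (h : a + b = c + d) :
    d = a + b - c := by rw [h]; abel

private lemma MT_rearr3 {G : Type*} [AddCommGroup G] {a b c d e : G}
    (h : a + e = b + (c + e - d)) : a = b + c - d := by
  have h' : a + e = (b + c - d) + e := by rw [h]; abel
  exact add_right_cancel h'

private lemma MT_rearr4 {G : Type*} [AddCommGroup G] {a b c d : G} (h : a + b = c + d) :
    b = c + d - a := by rw [← h]; abel

private lemma MT_aux {G : Type*} [AddCommGroup G] (op : G → G → G) (R L : G → G)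
    (hR : Function.Bijective R) (hL : Function.Bijective L)
    (hop : ∀ u v, op u v = R u + L v)
    (med : ∀ a b c d : G, op (op a b) (op c d) = op (op a c) (op b d))
    (hswap : ∀ x : G, R 0 + L (R x) = R (L x) + L 0) :
    ∃ f g : G → G,
      Function.Bijective f ∧ Function.Bijective g ∧
      (∀ a b : G, f (a + b) = f a + f b) ∧
      (∀ a b : G, g (a + b) = g a + g b) ∧
      (∀ a : G, f (g a) = g (f a)) ∧
      ∃ c : G, ∀ a b : G, op a b = f a + g b + c := by
  obtain ⟨c0, hc0⟩ := hR.2 0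
  obtain ⟨d0, hd0⟩ := hL.2 0
  have med' : ∀ a b c d : G, R (R a + L b) + L (R c + L d) = R (R a + L c) + L (R b + L d) := by
    intro a b c d
    have h := med a b c d
    rw [hop (op a b) (op c d), hop (op a c) (op b d), hop a b, hop c d, hop a c, hop b d] at h
    exact h
  have h1 : ∀ x b : G, R (x + L b) + L 0 = R (x + L c0) + L (R b) := by
    intro x b
    obtain ⟨a, rfl⟩ := hR.2 x
    have h := med' a b c0 d0
    rwa [hc0, hd0, add_zero, add_zero] at h
  have h2 : ∀ b : G, L (R b) = R (L b) + L 0 - R (L c0) := by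
    intro b
    have h := h1 0 b
    rw [zero_add, zero_add] at h
    exact MT_rearr2 h
  have h4 : ∀ x b : G, R (x + L b) = R (x + L c0) + R (L b) - R (L c0) := by
    intro x b
    have h := h1 x b
    rw [h2 b] at h
    exact MT_rearr3 h
  have h5 : ∀ x : G, R (x + L c0) = R x + R (L c0) - R 0 := by
    intro x
    have h := h4 x d0
    rw [hd0, add_zero] at h
    exact MT_rearr1 h
  have Radd : ∀ x y : G, R (x + y) = R x + R y - R 0 := by
    intro x y
    obtain ⟨b, rfl⟩ := hL.2 y
    rw [h4 x b, h5 x]; abel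
  have l1 : ∀ b d : G, L (R b + L d) = R (L b) + L (L d) - R (L c0) := by
    intro b d
    have h := med' c0 b c0 d
    rw [hc0, zero_add, zero_add, zero_add] at h
    exact MT_rearr2 h
  have Ladd : ∀ z w : G, L (z + w) = L z + L w - L 0 := by
    intro z w
    obtain ⟨b, rfl⟩ := hR.2 z
    obtain ⟨d, rfl⟩ := hL.2 w
    rw [l1 b d, h2 b]; abel
  refine ⟨fun x => R x - R 0, fun x => L x - L 0, ?_, ?_, ?_, ?_, ?_, ⟨R 0 + L 0, ?_⟩⟩
  · constructor
    · intro x y h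
      have h' : R x - R 0 = R y - R 0 := h
      exact hR.1 (sub_left_inj.mp h')
    · intro y
      obtain ⟨x, hx⟩ := hR.2 (y + R 0)
      exact ⟨x, by show R x - R 0 = y; rw [hx]; abel⟩
  · constructor
    · intro x y h
      have h' : L x - L 0 = L y - L 0 := h
      exact hL.1 (sub_left_inj.mp h')
    · intro y
      obtain ⟨x, hx⟩ := hL.2 (y + L 0)
      exact ⟨x, by show L x - L 0 = y; rw [hx]; abel⟩
  · intro a b
    show R (a + b) - R 0 = (R a - R 0) + (R b - R 0)
    rw [Radd]; abel
  · intro a b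
    show L (a + b) - L 0 = (L a - L 0) + (L b - L 0)
    rw [Ladd]; abel
  · intro x
    show R (L x - L 0) - R 0 = L (R x - R 0) - L 0
    have hLRx : L (R x) = R (L x) + L 0 - R 0 := MT_rearr4 (hswap x)
    have hLR0 : L (R 0) = R (L 0) + L 0 - R 0 := MT_rearr4 (hswap 0)
    have hRsub : R (L x - L 0) = R (L x) + R 0 - R (L 0) := by
      have h := Radd (L x - L 0) (L 0)
      rw [sub_add_cancel] at h
      exact MT_rearr1 h
    have hLsub : L (R x - R 0) = L (R x) + L 0 - L (R 0) := by
      have h := Ladd (R x - R 0) (R 0)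
      rw [sub_add_cancel] at h
      exact MT_rearr1 h
    rw [hRsub, hLsub, hLRx, hLR0]; abel
  · intro a b
    rw [hop a b]
    show R a + L b = (R a - R 0) + (L b - L 0) + (R 0 + L 0)
    abel

/-- Murdoch–Toyoda Theorem: a nonempty entropic quasigroup (X, ∗) admits an abelian group
    structure together with commuting automorphisms f, g and an element c with
    a ∗ b = f(a) + g(b) + c. -/
theorem stmt_17 {X : Type*} [Nonempty X] (op : X → X → X)
    (hent : ∀ a b c d : X, op (op a b) (op c d) = op (op a c) (op b d))
    (hleft : ∀ a b : X, ∃! x : X, op a x = b)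
    (hright : ∀ a b : X, ∃! y : X, op y a = b) :
    ∃ (add : X → X → X) (zero : X) (neg : X → X),
      (∀ a b c : X, add (add a b) c = add a (add b c)) ∧
      (∀ a b : X, add a b = add b a) ∧
      (∀ a : X, add a zero = a) ∧
      (∀ a : X, add a (neg a) = zero) ∧
      ∃ f g : X → X,
        Function.Bijective f ∧ Function.Bijective g ∧
        (∀ a b : X, f (add a b) = add (f a) (f b)) ∧
        (∀ a b : X, g (add a b) = add (g a) (g b)) ∧
        (∀ a : X, f (g a) = g (f a)) ∧
        ∃ c : X, ∀ a b : X, op a b = add (add (f a) (g b)) c := by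
  classical
  obtain ⟨e⟩ := ‹Nonempty X›
  choose ld hld using fun a b => (hleft a b).exists
  choose rd hrd using fun a b => (hright a b).exists
  have lcancel : ∀ a x y : X, op a x = op a y → x = y := fun a x y h =>
    (hleft a (op a y)).unique h rfl
  have rcancel : ∀ a x y : X, op x a = op y a → x = y := fun a x y h =>
    (hright a (op y a)).unique h rfl
  let Ri : X → X := fun a => rd e a
  let Li : X → X := fun b => ld e b
  let add : X → X → X := fun a b => op (Ri a) (Li b)
  let zero : X := op e e
  let neg : X → X := fun a => op e (ld (Ri a) zero)
  have hRi : ∀ a, op (Ri a) e = a := fun a => hrd e a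
  have hLi : ∀ b, op e (Li b) = b := fun b => hld e b
  have hRiR : ∀ x, Ri (op x e) = x := fun x => rcancel e _ _ (by rw [hRi])
  have hLiL : ∀ x, Li (op e x) = x := fun x => lcancel e _ _ (by rw [hLi])
  have hzeroR : ∀ a, add a zero = a := by
    intro a
    show op (Ri a) (Li (op e e)) = a
    rw [show Li (op e e) = e from hLiL e, hRi]
  have hzeroL : ∀ b, add zero b = b := by
    intro b
    show op (Ri (op e e)) (Li b) = b
    rw [show Ri (op e e) = e from hRiR e, hLi]
  have hnegR : ∀ a, add a (neg a) = zero := by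
    intro a
    show op (Ri a) (Li (op e (ld (Ri a) zero))) = zero
    rw [hLiL, hld]
  have theta : ∀ P Q : X, op (op e zero) (op (op P Q) zero) =
      op (op e (op P e)) (op (op e Q) zero) := by
    intro P Q
    calc op (op e zero) (op (op P Q) zero)
        = op (op e zero) (op (op P e) (op Q e)) := by
          rw [show op (op P Q) zero = op (op P e) (op Q e) from hent P Q e e]
      _ = op (op e (op P e)) (op zero (op Q e)) := hent e zero (op P e) (op Q e)
      _ = op (op e (op P e)) (op (op e Q) zero) := by
          rw [show op zero (op Q e) = op (op e Q) zero from hent e e Q e]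
  have aux3 : ∀ u v s t : X, op (op e (op u v)) (op (op s t) zero) =
      op (op e (op s e)) (op (op u t) (op v e)) := by
    intro u v s t
    calc op (op e (op u v)) (op (op s t) zero)
        = op (op e (op u v)) (op (op s e) (op t e)) := by
          rw [show op (op s t) zero = op (op s e) (op t e) from hent s t e e]
      _ = op (op e (op s e)) (op (op u v) (op t e)) := hent e (op u v) (op s e) (op t e)
      _ = op (op e (op s e)) (op (op u t) (op v e)) := by rw [hent u v t e]
  have ex' : ∀ u v s t : X, add (op u v) (op s t) = add (op u t) (op s v) := by
    intro u v s t
    refine rcancel zero _ _ (lcancel (op e zero) _ _ ?_)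
    show op (op e zero) (op (op (Ri (op u v)) (Li (op s t))) zero) =
      op (op e zero) (op (op (Ri (op u t)) (Li (op s v))) zero)
    rw [theta, theta, hRi, hRi, hLi, hLi, aux3 u v s t, aux3 u t s v, hent u t v e]
  have exch : ∀ a b c d : X, add (add a b) (add c d) = add (add a d) (add c b) :=
    fun a b c d => ex' (Ri a) (Li b) (Ri c) (Li d)
  have hcomm : ∀ a b : X, add a b = add b a := by
    intro a b
    have h := exch zero a b zero
    rwa [hzeroL a, hzeroR b, hzeroR zero, hzeroL (add b a)] at h
  have hmed : ∀ a b c d : X, add (add a b) (add c d) = add (add a c) (add b d) := by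
    intro a b c d
    calc add (add a b) (add c d) = add (add b a) (add c d) := by rw [hcomm a b]
      _ = add (add b d) (add c a) := exch b a c d
      _ = add (add c a) (add b d) := hcomm _ _
      _ = add (add a c) (add b d) := by rw [hcomm c a]
  have hassoc : ∀ a b c : X, add (add a b) c = add a (add b c) := by
    intro a b c
    have h := hmed a b zero c
    rwa [hzeroL c, hzeroR a] at h
  have hnegL : ∀ a, add (neg a) a = zero := fun a => (hcomm _ _).trans (hnegR a)
  letI : Add X := ⟨add⟩
  letI : Zero X := ⟨zero⟩
  letI : Neg X := ⟨neg⟩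
  letI : AddCommGroup X :=
    { add := add, add_assoc := hassoc, zero := zero,
      zero_add := hzeroL, add_zero := hzeroR,
      nsmul := nsmulRec, zsmul := zsmulRec,
      neg := neg, neg_add_cancel := hnegL, add_comm := hcomm }
  refine ⟨add, zero, neg, hassoc, hcomm, hzeroR, hnegR, ?_⟩
  have hRbij : Function.Bijective (fun x : X => op x e) :=
    ⟨fun x y h => rcancel e x y h, fun y => ⟨Ri y, hRi y⟩⟩
  have hLbij : Function.Bijective (fun x : X => op e x) :=
    ⟨fun x y h => lcancel e x y h, fun y => ⟨Li y, hLi y⟩⟩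
  have hkey : ∀ u v : X, add (op u e) (op e v) = op u v := by
    intro u v
    show op (Ri (op u e)) (Li (op e v)) = op u v
    rw [hRiR, hLiL]
  have hop : ∀ u v : X, op u v = (fun x : X => op x e) u + (fun x : X => op e x) v := by
    intro u v
    exact (hkey u v).symm
  have hswap : ∀ x : X,
      (fun x : X => op x e) 0 + (fun x : X => op e x) ((fun x : X => op x e) x) =
      (fun x : X => op x e) ((fun x : X => op e x) x) + (fun x : X => op e x) 0 := by
    intro x
    show add (op zero e) (op e (op x e)) = add (op (op e x) e) (op e zero)
    rw [hkey zero (op x e), hkey (op e x) zero]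
    exact hent e e x e
  obtain ⟨f, g, hf, hg, hfa, hga, hfg, c, hc⟩ :=
    MT_aux op (fun x : X => op x e) (fun x : X => op e x) hRbij hLbij hop hent hswap
  exact ⟨f, g, hf, hg, hfa, hga, hfg, c, hc⟩
end

section
/- Corollary III:1.25(i): Let G be a group of nilpotency class at most two, i.e. every commutator is central: ⁅⁅g, h⁆, k⁆ = 1 for all g, h, k ∈ G (equivalently [[G,G],G] = 1). Define the core operation a ∗ b = b · a⁻¹ · b on G. Then (a ∗ b) ∗ c = (a ∗ c⁻¹) ∗ b⁻¹ for all a, b, c ∈ G, and consequently ∗ is entropic: (a ∗ b) ∗ (c ∗ d) = (a ∗ c) ∗ (b ∗ d) for all a, b, c, d ∈ G. -/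
open scoped commutatorElement

/-! In a group of class at most two every commutator is central. Expanding both identities,
each side has the shape `X * a * Y` against `Y * a * X` with `Y⁻¹ * X` a product of
commutators, and such words agree as soon as `Y⁻¹ * X` is central. -/

section ClassTwo

variable {G : Type*} [Group G]

theorem mul_mul_eq_mul_mul_of_inv_mul_mem_center {X Y : G} (h : Y⁻¹ * X ∈ Subgroup.center G)
    (a : G) : X * a * Y = Y * a * X :=
  calc X * a * Y = Y * ((Y⁻¹ * X) * (a * Y)) := by group
    _ = Y * ((a * Y) * (Y⁻¹ * X)) := by rw [Subgroup.mem_center_iff.mp h (a * Y)]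
    _ = Y * a * X := by group

theorem commutatorElement_mem_center (hnil : ∀ g h k : G, ⁅⁅g, h⁆, k⁆ = 1) (g h : G) :
    ⁅g, h⁆ ∈ Subgroup.center G :=
  Subgroup.mem_center_iff.mpr fun k =>
    (commutatorElement_eq_one_iff_commute.mp (hnil g h k)).eq.symm

def core (a b : G) : G := b * a⁻¹ * b

theorem core_core_eq_core_inv_core_inv (hnil : ∀ g h k : G, ⁅⁅g, h⁆, k⁆ = 1) (a b c : G) :
    core (core a b) c = core (core a c⁻¹) b⁻¹ := by
  have hcomm : (b⁻¹ * c)⁻¹ * (c * b⁻¹) = ⁅c⁻¹, b⁆ := by rw [commutatorElement_def]; group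
  have hswap := mul_mul_eq_mul_mul_of_inv_mul_mem_center
    (hcomm ▸ commutatorElement_mem_center hnil c⁻¹ b) a
  calc core (core a b) c = c * b⁻¹ * a * (b⁻¹ * c) := by simp only [core]; group
    _ = b⁻¹ * c * a * (c * b⁻¹) := hswap
    _ = core (core a c⁻¹) b⁻¹ := by simp only [core]; group

theorem core_entropic (hnil : ∀ g h k : G, ⁅⁅g, h⁆, k⁆ = 1) (a b c d : G) :
    core (core a b) (core c d) = core (core a c) (core b d) := by
  have hcomm : (b⁻¹ * d * c⁻¹)⁻¹ * (c⁻¹ * d * b⁻¹) = ⁅c, d⁻¹ * b⁆ * ⁅d⁻¹, b⁆ := by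
    simp only [commutatorElement_def]; group
  have hswap := mul_mul_eq_mul_mul_of_inv_mul_mem_center (hcomm ▸ Subgroup.mul_mem _
    (commutatorElement_mem_center hnil c (d⁻¹ * b)) (commutatorElement_mem_center hnil d⁻¹ b)) a
  calc core (core a b) (core c d) = d * (c⁻¹ * d * b⁻¹ * a * (b⁻¹ * d * c⁻¹)) * d := by
        simp only [core]; group
    _ = d * (b⁻¹ * d * c⁻¹ * a * (c⁻¹ * d * b⁻¹)) * d := by rw [hswap]
    _ = core (core a c) (core b d) := by simp only [core]; group

end ClassTwo

/-- Corollary III:1.25(i): in a group of nilpotency class at most two, the core operation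
    a ∗ b = b·a⁻¹·b satisfies (a∗b)∗c = (a∗c⁻¹)∗b⁻¹ and is entropic. -/
theorem stmt_18 {G : Type*} [Group G]
    (hnil : ∀ g h k : G, ⁅⁅g, h⁆, k⁆ = 1)
    (op : G → G → G) (hop : ∀ a b : G, op a b = b * a⁻¹ * b) :
    (∀ a b c : G, op (op a b) c = op (op a c⁻¹) b⁻¹) ∧
    (∀ a b c d : G, op (op a b) (op c d) = op (op a c) (op b d)) := by
  obtain rfl : op = core := funext₂ hop
  exact ⟨core_core_eq_core_inv_core_inv hnil, core_entropic hnil⟩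
end
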